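/- Let t satisfy t = 1 + z·(b·t + (ac/b)·(t-1)²) for constants a,b,c with b≠0, equivalently t = 1 + (b/a)·f where f = z(a + bf + cf²). Then h = z·t is pseudo-involutory and its B-function is B_h(z) = b·C(ac·z), where C is the Catalan generating function. -/

import Mathlib

open PowerSeries

/-- Composition `f ∘ g` of formal power series (meaningful when the constant
coefficient of `g` is zero). -/
noncomputable def comp (f g : PowerSeries ℚ) : PowerSeries ℚ :=
  PowerSeries.mk fun n =>
    ∑ i ∈ Finset.range (n + 1), (PowerSeries.coeff i f) * (PowerSeries.coeff n (g ^ i))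

/-- A formal power series `f` is pseudo-involutory when its compositional
inverse is `-f(-z)`. -/
def PseudoInvolutory (f : PowerSeries ℚ) : Prop :=
  comp f (-(comp f (-X))) = X ∧ comp (-(comp f (-X))) f = X

/-!
With `q = ac/b`, the series `h = X·t` is the solution with zero constant term of
`Φ(X, h) = 0`, where `Φ = quadRel b q`, and `Φ(x, y) = Φ(-y, -x)`.
Substituting `-X` shows that `k = -h(-X)` satisfies `Φ(k, X) = 0`; substituting `k` into
`Φ(X, h) = 0` and `h` into `Φ(k, X) = 0`, the uniqueness of solutions with zero constant term
of `Φ(x, ·) = 0` and of `Φ(·, y) = 0` gives `h ∘ k = X` and `k ∘ h = X`.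
For the `B`-function, with `w = X·h` both `h - X` and `w·B(w)` solve `u = b·w + q·u²`.
-/

section QuadraticRelation

variable {R : Type*} [CommRing R]

noncomputable def quadRel (b q : R) (x y : R⟦X⟧) : R⟦X⟧ :=
  y - x - C b * x * y - C q * (y - x) ^ 2

theorem quadRel_neg_neg (b q : R) (x y : R⟦X⟧) :
    quadRel b q (-y) (-x) = quadRel b q x y := by
  unfold quadRel; ring

theorem quadRel_subst_eq_zero {g : R⟦X⟧} (hg : HasSubst g) {b q : R} {x y : R⟦X⟧}
    (h : quadRel b q x y = 0) : quadRel b q (subst g x) (subst g y) = 0 := by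
  rw [← coe_substAlgHom hg]
  simpa [quadRel, C_eq_algebraMap] using congrArg (substAlgHom hg) h

theorem eq_of_quadRel_eq_zero_right {b q : R} {x y₁ y₂ : R⟦X⟧} (hx : constantCoeff x = 0)
    (hy₁ : constantCoeff y₁ = 0) (hy₂ : constantCoeff y₂ = 0)
    (h₁ : quadRel b q x y₁ = 0) (h₂ : quadRel b q x y₂ = 0) : y₁ = y₂ := by
  have hunit : IsUnit (1 - C b * x - C q * (y₁ + y₂ - 2 * x)) := by
    rw [isUnit_iff_constantCoeff]; simp [hx, hy₁, hy₂]
  have : (1 - C b * x - C q * (y₁ + y₂ - 2 * x)) * (y₁ - y₂) = 0 := by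
    unfold quadRel at h₁ h₂; linear_combination h₁ - h₂
  exact sub_eq_zero.mp (hunit.mul_right_eq_zero.mp this)

theorem eq_of_quadRel_eq_zero_left {b q : R} {x₁ x₂ y : R⟦X⟧} (hy : constantCoeff y = 0)
    (hx₁ : constantCoeff x₁ = 0) (hx₂ : constantCoeff x₂ = 0)
    (h₁ : quadRel b q x₁ y = 0) (h₂ : quadRel b q x₂ y = 0) : x₁ = x₂ := by
  rw [← quadRel_neg_neg] at h₁ h₂
  exact neg_injective <|
    eq_of_quadRel_eq_zero_right (by simp [hy]) (by simp [hx₁]) (by simp [hx₂]) h₁ h₂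

theorem eq_of_eq_add_C_mul_sq {q : R} {c y₁ y₂ : R⟦X⟧}
    (hy₁ : constantCoeff y₁ = 0) (hy₂ : constantCoeff y₂ = 0)
    (h₁ : y₁ = c + C q * y₁ ^ 2) (h₂ : y₂ = c + C q * y₂ ^ 2) : y₁ = y₂ := by
  have hunit : IsUnit (1 - C q * (y₁ + y₂)) := by
    rw [isUnit_iff_constantCoeff]; simp [hy₁, hy₂]
  have : (1 - C q * (y₁ + y₂)) * (y₁ - y₂) = 0 := by
    linear_combination h₁ - h₂
  exact sub_eq_zero.mp (hunit.mul_right_eq_zero.mp this)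

theorem subst_C_mul_rescale {w : R⟦X⟧} (hw : constantCoeff w = 0) (b r : R) (f : R⟦X⟧) :
    subst w (C b * rescale r f) = C b * subst (C r * w) f := by
  have hw' := HasSubst.of_constantCoeff_zero' hw
  rw [subst_mul hw', rescale_eq_subst, subst_comp_subst_apply (HasSubst.smul_X' r) hw',
    subst_smul hw', subst_X hw', smul_eq_C_mul, subst_C]
  rfl

theorem subst_eq_one_add_mul_sq {Cat u : R⟦X⟧} (hCat : Cat = 1 + X * Cat ^ 2) (hu : HasSubst u) :
    subst u Cat = 1 + u * subst u Cat ^ 2 := by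
  conv_lhs => rw [hCat]
  rw [← coe_substAlgHom hu, map_add, map_one, map_mul, map_pow, coe_substAlgHom, subst_X hu]

theorem subst_C_mul_rescale_of_catalan (b q : R) {Cat w : R⟦X⟧} (hCat : Cat = 1 + X * Cat ^ 2)
    (hw : constantCoeff w = 0) :
    subst w (C b * rescale (b * q) Cat) =
      C b + C q * w * (subst w (C b * rescale (b * q) Cat)) ^ 2 := by
  have hw' : HasSubst (C (b * q) * w) := HasSubst.of_constantCoeff_zero' (by simp [hw])
  rw [subst_C_mul_rescale hw]
  have hQ := subst_eq_one_add_mul_sq hCat hw'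
  set Q := subst (C (b * q) * w) Cat
  rw [map_mul C b q] at hQ
  linear_combination C b * hQ

theorem sub_X_eq_of_quadRel (b q : R) {h Cat : R⟦X⟧} (h0 : constantCoeff h = 0)
    (hh : quadRel b q X h = 0) (hCat : Cat = 1 + X * Cat ^ 2) :
    h - X = X * h * subst (X * h) (C b * rescale (b * q) Cat) := by
  have hB := subst_C_mul_rescale_of_catalan b q hCat (by simp : constantCoeff (X * h) = 0)
  apply eq_of_eq_add_C_mul_sq (c := C b * (X * h)) (q := q) (by simp [h0]) (by simp)
  · unfold quadRel at hh; linear_combination hh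
  · linear_combination (X * h) * hB

end QuadraticRelation

theorem comp_eq_subst {g : ℚ⟦X⟧} (hg : constantCoeff g = 0) (f : ℚ⟦X⟧) :
    comp f g = subst g f := by
  ext n
  rw [coeff_subst' (HasSubst.of_constantCoeff_zero' hg),
    finsum_eq_sum_of_support_subset (s := Finset.range (n + 1))]
  · simp [comp]
  · intro d hd
    simp only [Function.mem_support, Finset.coe_range, Set.mem_Iio] at hd ⊢
    by_contra! hnd
    exact hd (by rw [coeff_of_lt_order n ((Nat.cast_lt.mpr hnd).trans_le
      (le_order_pow_of_constantCoeff_eq_zero d hg)), smul_zero])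

theorem pseudoInvolutory_of_quadRel (b q : ℚ) {h : ℚ⟦X⟧} (h0 : constantCoeff h = 0)
    (hh : quadRel b q X h = 0) : PseudoInvolutory h := by
  have hX0 : constantCoeff (-X : ℚ⟦X⟧) = 0 := by simp
  set k : ℚ⟦X⟧ := -subst (-X : ℚ⟦X⟧) h with hk_def
  have hk0 : constantCoeff k = 0 := by
    rw [hk_def, map_neg, neg_eq_zero]
    exact constantCoeff_subst_eq_zero hX0 h h0
  have hk : quadRel b q k X = 0 := by
    have hX := HasSubst.of_constantCoeff_zero' hX0
    have := quadRel_subst_eq_zero hX hh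
    rwa [subst_X hX, ← neg_neg (subst _ h), ← hk_def, quadRel_neg_neg] at this
  have hk' := HasSubst.of_constantCoeff_zero' hk0
  have hh' := HasSubst.of_constantCoeff_zero' h0
  rw [PseudoInvolutory, comp_eq_subst hX0, comp_eq_subst hk0, comp_eq_subst h0]
  refine ⟨?_, ?_⟩
  · refine eq_of_quadRel_eq_zero_right hk0 (constantCoeff_subst_eq_zero hk0 h h0) (by simp) ?_ hk
    simpa [subst_X hk'] using quadRel_subst_eq_zero hk' hh
  · refine eq_of_quadRel_eq_zero_left h0 (constantCoeff_subst_eq_zero h0 k hk0) (by simp) ?_ hh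
    simpa [subst_X hh'] using quadRel_subst_eq_zero hh' hk

/-- Let `t` satisfy `t = 1 + z·(b·t + (ac/b)·(t-1)²)` with `b ≠ 0`
(equivalently `t = 1 + (b/a)·f` where `f = z(a + bf + cf²)`).  Then
`h = z·t` is pseudo-involutory and its `B`-function is `B_h(z) = b·C(ac·z)`,
where `C` is the Catalan generating function. -/
theorem quadratic_family_B (a b c : ℚ) (hb : b ≠ 0) (t Cat : PowerSeries ℚ)
    (hCat : Cat = 1 + X * Cat ^ 2)
    (ht : t = 1 + X * (PowerSeries.C b * t + PowerSeries.C (a * c / b) * (t - 1) ^ 2)) :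
    PseudoInvolutory (X * t) ∧
      (X * t) - X =
        X * (X * t) *
          comp (PowerSeries.C b * PowerSeries.rescale (a * c) Cat) (X * (X * t)) := by
  have hac : a * c = b * (a * c / b) := by field_simp
  have hh : quadRel b (a * c / b) X (X * t) = 0 := by
    unfold quadRel; linear_combination X * ht
  have h0 : constantCoeff (X * t) = 0 := by simp
  refine ⟨pseudoInvolutory_of_quadRel b _ h0 hh, ?_⟩
  rw [hac, comp_eq_subst (by simp)]
  exact sub_X_eq_of_quadRel b _ h0 hh hCat
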